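/- arXiv:2204.00099 — 7 statements merged into one kernel-verified Lean document; each statement's English description precedes it below -/
import Mathlib

section
/- Assume Schanuel's conjecture. Then for all complex numbers α₁, …, αₙ, the transcendence degree over ℚ of the field ℚ(α₁, …, αₙ, sin α₁, …, sin αₙ) is at least the dimension of the ℚ-linear span of α₁, …, αₙ in ℂ. -/
/-- The dimension of the `ℚ`-linear span of a finite family of complex numbers. -/
noncomputable def qLinDim {n : ℕ} (α : Fin n → ℂ) : ℕ :=
  Module.finrank ℚ (Submodule.span ℚ (Set.range α))

/-- **Schanuel's conjecture**: for all complex numbers `α₁, …, αₙ`, the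
transcendence degree over `ℚ` of `ℚ(α₁, …, αₙ, exp α₁, …, exp αₙ)` is at least
the dimension of the `ℚ`-linear span of `α₁, …, αₙ`.  Since this field is
generated by the family `(αᵢ)ᵢ ⊔ (exp αᵢ)ᵢ`, its transcendence degree is the
maximal cardinality of an algebraically independent subfamily of the
generators, so the inequality is expressed by the existence of an
algebraically independent subfamily of the generators of the right size. -/
def SchanuelConjecture : Prop :=
  ∀ (n : ℕ) (α : Fin n → ℂ),
    ∃ s : Finset (Fin n ⊕ Fin n),
      s.card = qLinDim α ∧
      AlgebraicIndependent ℚ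
        (fun i : s => Sum.elim α (fun j => Complex.exp (α j)) (i : Fin n ⊕ Fin n))

/-!
Apply Schanuel's conjecture to `i α₁, …, i αₙ`, whose `ℚ`-span has the same dimension as that of
the `αⱼ`. It yields an algebraically independent subfamily of the `i αⱼ` and `exp (i αⱼ)`. Each of
these is algebraic over the field generated by the corresponding `αⱼ` and `sin αⱼ`, since `i` is
algebraic and `exp (i z) = cos z + i sin z` with `cos² z = 1 - sin² z`. A family of `k` elements
that makes `k` algebraically independent elements algebraic over it is itself algebraically
independent (rank counting in the algebraic matroid), so the corresponding subfamily of the `αⱼ`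
and `sin αⱼ` is algebraically independent.
-/

open Set Function Subalgebra AlgebraicIndependent Complex

theorem AlgebraicIndependent.of_isAlgebraic_adjoin_range {ι R A : Type*} [Finite ι]
    [CommRing R] [CommRing A] [IsDomain A] [Algebra R A] {f g : ι → A}
    (hf : AlgebraicIndependent R f)
    (hfg : ∀ i, IsAlgebraic (Algebra.adjoin R (range g)) (f i)) :
    AlgebraicIndependent R g := by
  have := (faithfulSMul_iff_algebraMap_injective R A).mpr hf.algebraMap_injective
  have := (algebraMap R A).domain_nontrivial
  set M := matroid R A
  have hcl : range f ⊆ M.closure (range g) := by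
    rw [matroid_closure_eq]
    rintro _ ⟨i, rfl⟩
    exact hfg i
  have hle : ENat.card ι ≤ M.eRk (range g) := calc
    ENat.card ι ≤ (range f).encard := hf.injective.encard_range
    _ ≤ M.eRk (M.closure (range g)) :=
      (matroid_indep_iff.2 hf.to_subtype_range).encard_le_eRk_of_subset hcl
    _ = M.eRk (range g) := M.eRk_closure_eq _
  have hg_card : (range g).encard = ENat.card ι :=
    le_antisymm (by simpa using encard_image_le g univ) (hle.trans (M.eRk_le_encard _))
  have hg_inj : Injective g :=
    injOn_univ.1 (finite_univ.injOn_of_encard_image_eq (by rw [image_univ, hg_card, encard_univ]))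
  have hg_indep : M.Indep (range g) := by
    rw [Matroid.indep_iff_eRk_eq_encard_of_finite (finite_range g), hg_card]
    exact le_antisymm (hg_card ▸ M.eRk_le_encard _) hle
  exact (algebraicIndependent_subtype_range hg_inj).1 (matroid_indep_iff.1 hg_indep)

theorem qLinDim_const_mul {n : ℕ} (α : Fin n → ℂ) {c : ℂ} (hc : c ≠ 0) :
    qLinDim (fun j => c * α j) = qLinDim α := by
  let e : ℂ ≃ₗ[ℚ] ℂ := (LinearEquiv.smulOfNeZero ℂ ℂ c hc).restrictScalars ℚ
  have : range (fun j => c * α j) = e '' range α := by rw [← range_comp]; rfl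
  rw [qLinDim, qLinDim, this, ← LinearEquiv.coe_coe, ← Submodule.map_span]
  exact LinearEquiv.finrank_map_eq e _

theorem Subalgebra.isAlgebraic_of_pow_mem {R A : Type*} [CommRing R] [CommRing A] [Nontrivial A]
    [Algebra R A] {S : Subalgebra R A} {x : A} {n : ℕ} (hn : 0 < n) (hx : x ^ n ∈ S) :
    IsAlgebraic S x :=
  .of_pow hn (isAlgebraic_algebraMap (⟨_, hx⟩ : S))

theorem I_mul_mem_algebraicClosure {S : Subalgebra ℚ ℂ} {z : ℂ} (hz : z ∈ S) :
    I * z ∈ algebraicClosure S ℂ :=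
  mul_mem (S.isAlgebraic_of_pow_mem two_pos (by simp [S.neg_mem S.one_mem]))
    ((algebraicClosure S ℂ).algebraMap_mem (⟨z, hz⟩ : S))

theorem exp_I_mul_mem_algebraicClosure {S : Subalgebra ℚ ℂ} {z : ℂ} (hz : sin z ∈ S) :
    exp (I * z) ∈ algebraicClosure S ℂ := by
  have hcos : cos z ∈ algebraicClosure S ℂ :=
    S.isAlgebraic_of_pow_mem two_pos (by rw [cos_sq']; exact sub_mem S.one_mem (pow_mem hz 2))
  rw [mul_comm, exp_mul_I]
  exact add_mem hcos (mul_comm I _ ▸ I_mul_mem_algebraicClosure hz)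

/-- **Schanuel's conjecture for sine** (Fact 2.4).  Assuming Schanuel's
conjecture, for all complex `α₁, …, αₙ` the transcendence degree over `ℚ` of
`ℚ(α₁, …, αₙ, sin α₁, …, sin αₙ)` is at least the dimension of the `ℚ`-linear
span of `α₁, …, αₙ`. -/
theorem schanuel_sine (schanuel : SchanuelConjecture) (n : ℕ) (α : Fin n → ℂ) :
    ∃ s : Finset (Fin n ⊕ Fin n),
      s.card = qLinDim α ∧
      AlgebraicIndependent ℚ
        (fun i : s => Sum.elim α (fun j => Complex.sin (α j)) (i : Fin n ⊕ Fin n)) := by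
  obtain ⟨s, hcard, hindep⟩ := schanuel n (fun j => I * α j)
  refine ⟨s, hcard.trans (qLinDim_const_mul α I_ne_zero), hindep.of_isAlgebraic_adjoin_range ?_⟩
  rintro ⟨j | j, hj⟩
  · exact I_mul_mem_algebraicClosure (Algebra.subset_adjoin ⟨⟨.inl j, hj⟩, rfl⟩)
  · exact exp_I_mul_mem_algebraicClosure (Algebra.subset_adjoin ⟨⟨.inr j, hj⟩, rfl⟩)
end

section
/- Let α₁, …, αₙ ∈ ℂ and let α lie in the ℚ-linear span of α₁, …, αₙ. Then sin α is algebraic over the field ℚ(sin α₁, …, sin αₙ). -/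
open Complex Polynomial

private lemma exp_quartic (x : ℂ) :
    exp (I * x) ^ 4 + (4 * sin x ^ 2 - 2) * exp (I * x) ^ 2 + 1 = 0 := by
  have h : exp (-x * I) = (exp (x * I))⁻¹ := by
    rw [neg_mul, Complex.exp_neg]
  rw [Complex.sin, h, mul_comm I x]
  have h0 : exp (x * I) ≠ 0 := Complex.exp_ne_zero _
  field_simp
  ring_nf
  simp [Complex.I_sq]

set_option synthInstance.maxHeartbeats 1000000 in
/-- **Fact 2.5.** If `α` lies in the `ℚ`-linear span of `α₁, …, αₙ ∈ ℂ`, then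
`sin α` is algebraic over the field `ℚ(sin α₁, …, sin αₙ)`. -/
theorem sin_isAlgebraic_of_mem_span
    (n : ℕ) (a : Fin n → ℂ) (α : ℂ)
    (hα : α ∈ Submodule.span ℚ (Set.range a)) :
    IsAlgebraic
      (IntermediateField.adjoin ℚ (Set.range fun i => Complex.sin (a i)))
      (Complex.sin α) := by
  set K := IntermediateField.adjoin ℚ (Set.range fun i => Complex.sin (a i)) with hK
  -- helpers
  have hmul : ∀ {x y : ℂ}, IsAlgebraic K x → IsAlgebraic K y → IsAlgebraic K (x * y) :=
    fun hx hy => (hx.isIntegral.mul hy.isIntegral).isAlgebraic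
  have hsub : ∀ {x y : ℂ}, IsAlgebraic K x → IsAlgebraic K y → IsAlgebraic K (x - y) :=
    fun hx hy => (hx.isIntegral.sub hy.isIntegral).isAlgebraic
  -- main claim: exp (I * β) is algebraic for β in the span
  have main : IsAlgebraic K (exp (I * α)) := by
    induction hα using Submodule.span_induction with
    | mem x hx =>
      obtain ⟨i, rfl⟩ := hx
      have hmem : Complex.sin (a i) ∈ K := by
        exact IntermediateField.subset_adjoin ℚ _ ⟨i, rfl⟩
      set s : K := ⟨Complex.sin (a i), hmem⟩ with hs
      refine ⟨X ^ 4 + (C (4 * s ^ 2 - 2) * X ^ 2 + 1), ?_, ?_⟩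
      · refine Polynomial.Monic.ne_zero (Polynomial.monic_X_pow_add ?_)
        have h1 : degree (C (4 * s ^ 2 - 2) * X ^ 2) ≤ 2 := by
          calc degree (C (4 * s ^ 2 - 2) * X ^ 2) ≤ _ + _ := Polynomial.degree_mul_le _ _
            _ ≤ 0 + 2 := add_le_add Polynomial.degree_C_le (Polynomial.degree_X_pow 2).le
            _ = 2 := zero_add 2
        have h2 : degree (1 : (↥K)[X]) ≤ 0 := Polynomial.degree_one_le
        calc degree (C (4 * s ^ 2 - 2) * X ^ 2 + 1) ≤ max 2 0 :=
              le_trans (Polynomial.degree_add_le _ _) (max_le_max h1 h2)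
          _ < 4 := by norm_num
      · have hmap : (algebraMap K ℂ) s = Complex.sin (a i) := rfl
        simp only [map_add, map_mul, map_pow, map_one, aeval_X, aeval_C, map_sub,
          map_mul, map_ofNat, hmap]
        simpa [← add_assoc] using exp_quartic (a i)
    | zero =>
      simp only [mul_zero, Complex.exp_zero]
      exact isAlgebraic_one
    | add x y hx hy ihx ihy =>
      rw [mul_add, Complex.exp_add]
      exact hmul ihx ihy
    | smul q x hx ih =>
      have hd : (0 : ℕ) < q.den := q.pos
      refine IsAlgebraic.of_pow hd ?_
      have key : exp (I * (q • x)) ^ (q.den : ℕ) = exp (I * x) ^ (q.num : ℤ) := by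
        rw [← Complex.exp_nat_mul, ← Complex.exp_int_mul]
        congr 1
        rw [Rat.smul_def]
        have hden : ((q.den : ℂ)) ≠ 0 := by
          exact_mod_cast Nat.cast_ne_zero.mpr q.den_nz
        have hq : (q : ℂ) = (q.num : ℂ) / (q.den : ℂ) := by
          rw [Rat.cast_def]
        rw [hq]
        field_simp
      rw [key]
      rcases Int.natAbs_eq q.num with h | h
      · rw [h, zpow_natCast]
        exact (ih.isIntegral.pow _).isAlgebraic
      · rw [h, zpow_neg, zpow_natCast]
        exact IsAlgebraic.inv (ih.isIntegral.pow _).isAlgebraic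
  -- I is algebraic over K
  have hI : IsAlgebraic K I := by
    refine ⟨X ^ 2 + 1, ?_, ?_⟩
    · exact Polynomial.Monic.ne_zero (Polynomial.monic_X_pow_add
        (lt_of_le_of_lt Polynomial.degree_one_le (by norm_num)))
    · simp [Complex.I_sq]
  -- half is algebraic
  have hhalf : IsAlgebraic K (2 : ℂ)⁻¹ :=
    IsAlgebraic.inv (isAlgebraic_nat 2)
  -- sin α = (exp(I*α)⁻¹ - exp(I*α)) * I / 2
  have hsin : Complex.sin α = ((exp (I * α))⁻¹ - exp (I * α)) * I * (2 : ℂ)⁻¹ := by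
    rw [Complex.sin, neg_mul, Complex.exp_neg, mul_comm α I]
    ring
  rw [hsin]
  exact hmul (hmul (hsub (IsAlgebraic.inv main) main) hI) hhalf
end

section
/- Let X, d be natural numbers with X ≤ d. Then there is an interval I ⊆ [−1, 1] containing sin X such that for all natural numbers Y, if sin Y ∈ I then X is the best approximate of Y up to d (Y|_d = X) and sin X ≤ sin Y. -/
/-- `BestApp X d Y` says that `Y` is the best approximate of `X` up to `d`
(written `X|_d = Y`): `Y ≤ d`, `sin Y ≤ sin X`, and for every `Z ≤ d` with
`Z ≠ Y` and `sin Z ≤ sin X` one has `sin Z < sin Y`. -/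
def BestApp (X d Y : ℕ) : Prop :=
  Y ≤ d ∧ Real.sin Y ≤ Real.sin X ∧
    ∀ Z : ℕ, Z ≤ d → Z ≠ Y → Real.sin Z ≤ Real.sin X → Real.sin Z < Real.sin Y

/-!
Since `π` is irrational, `n ↦ sin n` is injective on the integers, so for `Z ≠ X` the value
`sin Z` lies strictly below or strictly above `sin X`. Only finitely many `Z ≤ d` lie above, so
there is room between `sin X` and the least of them.
-/

open Real Set

theorem Real.sin_intCast_injective : Function.Injective (fun n : ℤ => sin n) := by
  intro m n h
  obtain ⟨k, hk | hk⟩ := sin_eq_sin_iff.mp h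
  · by_contra hmn
    have hk0 : 2 * k ≠ 0 := fun h0 => hmn (by simpa [show k = 0 by omega] using hk.symm)
    refine (irrational_pi.intCast_mul hk0).ne_int (n - m) ?_
    push_cast
    linarith
  · refine ((irrational_pi.intCast_mul (by omega : 2 * k + 1 ≠ 0)).ne_int (n + m) ?_).elim
    push_cast
    linarith

theorem Real.sin_natCast_injective : Function.Injective (fun n : ℕ => sin n) := fun m n h =>
  Nat.cast_injective (R := ℤ) (sin_intCast_injective (by simpa using h))

/-- The interval `[sin X, b)` of the paper, `b` being the least `sin Z > sin X` with `Z ≤ d`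
(and `[sin X, 1]` if there is none). -/
def bestAppInterval (X d : ℕ) : Set ℝ :=
  Icc (sin X) 1 ∩ ⋂ Z ∈ {Z : ℕ | Z ≤ d ∧ sin X < sin Z}, Iio (sin Z)

namespace bestAppInterval

variable {X d : ℕ}

theorem ordConnected : (bestAppInterval X d).OrdConnected :=
  ordConnected_Icc.inter (ordConnected_biInter fun _ _ => ordConnected_Iio)

theorem subset_Icc : bestAppInterval X d ⊆ Icc (-1) 1 :=
  fun _ hy => ⟨(neg_one_le_sin X).trans hy.1.1, hy.1.2⟩

theorem sin_mem : sin X ∈ bestAppInterval X d :=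
  ⟨⟨le_rfl, sin_le_one X⟩, mem_iInter₂.mpr fun _ hZ => hZ.2⟩

theorem sin_le_of_mem {y : ℝ} (hy : y ∈ bestAppInterval X d) : sin X ≤ y :=
  hy.1.1

theorem bestApp_of_sin_mem {Y : ℕ} (hXd : X ≤ d) (hY : sin Y ∈ bestAppInterval X d) : BestApp Y d X := by
  refine ⟨hXd, sin_le_of_mem hY, fun Z hZd hZX hZY => ?_⟩
  have hne : sin Z ≠ sin X := fun h => hZX (sin_natCast_injective h)
  refine lt_of_le_of_ne (not_lt.mp fun hXZ => ?_) hne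
  have hYZ : sin Y < sin Z := mem_iInter₂.mp hY.2 Z ⟨hZd, hXZ⟩
  exact hYZ.not_ge hZY

end bestAppInterval

/-- **Lemma 3.3.** If `X ≤ d`, there is an interval `I ⊆ [−1, 1]` containing
`sin X` such that for every natural `Y` with `sin Y ∈ I`, `X` is the best
approximate of `Y` up to `d` and `sin X ≤ sin Y`. -/
theorem exists_interval_bestApp (X d : ℕ) (hXd : X ≤ d) :
    ∃ I : Set ℝ, I.OrdConnected ∧ I ⊆ Set.Icc (-1) 1 ∧ Real.sin X ∈ I ∧
      ∀ Y : ℕ, Real.sin Y ∈ I → BestApp Y d X ∧ Real.sin X ≤ Real.sin Y :=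
  ⟨bestAppInterval X d, bestAppInterval.ordConnected, bestAppInterval.subset_Icc,
    bestAppInterval.sin_mem, fun _ hY =>
      ⟨bestAppInterval.bestApp_of_sin_mem hXd hY, bestAppInterval.sin_le_of_mem hY⟩⟩
end

section
/- Let X be a natural number and let J ⊆ (−1, 1) be an open interval containing sin X. Then for every natural number b there exists a natural number d with d > b such that for all natural numbers Y, if X is the best approximate of Y up to d (Y|_d = X), then sin Y ∈ J. -/
open Real Set

theorem AddCircle.denseRange_nsmul_coe {a p : ℝ} [Fact (0 < p)] (h : Irrational (a / p)) :
    DenseRange (· • (a : AddCircle p) : ℕ → AddCircle p) :=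
  denseRange_zsmul_iff_nsmul.mp (AddCircle.denseRange_zsmul_coe_iff.mpr h)

theorem Real.Angle.denseRange_natCast : DenseRange (fun n : ℕ => ((n : ℝ) : Angle)) := by
  have : Fact (0 < 2 * π) := ⟨two_pi_pos⟩
  have hirr : Irrational (1 / (2 * π)) := by
    rw [one_div, irrational_inv_iff]
    simpa using irrational_pi.natCast_mul two_ne_zero
  have hdense := AddCircle.denseRange_nsmul_coe hirr
  simp only [← AddCircle.coe_nsmul, nsmul_eq_mul, mul_one] at hdense
  exact hdense

theorem exists_nat_sin_mem_of_isOpen {U : Set ℝ} (hU : IsOpen U)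
    (hne : (U ∩ Icc (-1) 1).Nonempty) : ∃ n : ℕ, sin n ∈ U := by
  obtain ⟨y, hyU, hy⟩ := hne
  obtain ⟨n, hn⟩ := Angle.denseRange_natCast.exists_mem_open
    (hU.preimage Angle.continuous_sin) ⟨(arcsin y : Angle), by
      rwa [mem_preimage, Angle.sin_coe, sin_arcsin hy.1 hy.2]⟩
  exact ⟨n, by rwa [mem_preimage, Angle.sin_coe] at hn⟩

theorem BestApp.sin_lt_sin_of_le {Y d X Z : ℕ} (h : BestApp Y d X) (hZ : Z ≤ d)
    (hXZ : sin X < sin Z) : sin Y < sin Z := by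
  by_contra! hZY
  have hZX : Z ≠ X := by rintro rfl; exact hXZ.false
  exact (h.2.2 Z hZ hZX hZY).not_gt hXZ

/-- **Lemma 3.4.** Let `J ⊆ (−1, 1)` be an open interval around `sin X`.  Then
there are arbitrarily large `d` such that every `Y` whose best approximate up
to `d` is `X` satisfies `sin Y ∈ J`. -/
theorem exists_large_degree_bestApp (X : ℕ) (u v : ℝ)
    (hJ : Set.Ioo u v ⊆ Set.Ioo (-1) 1) (hX : Real.sin X ∈ Set.Ioo u v) :
    ∀ b : ℕ, ∃ d : ℕ, d > b ∧
      ∀ Y : ℕ, BestApp Y d X → Real.sin Y ∈ Set.Ioo u v := by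
  intro b
  obtain ⟨t, hXt, htv⟩ := exists_between (lt_min hX.2 (hJ hX).2)
  obtain ⟨Z, hXZ, hZv⟩ : ∃ Z : ℕ, sin Z ∈ Ioo (sin X) v :=
    exists_nat_sin_mem_of_isOpen isOpen_Ioo
      ⟨t, ⟨hXt, htv.trans_le (min_le_left _ _)⟩,
        (neg_one_le_sin X).trans hXt.le, htv.le.trans (min_le_right _ _)⟩
  refine ⟨max (b + 1) Z, by omega, fun Y hY => ⟨hX.1.trans_le hY.2.1, ?_⟩⟩
  exact (hY.sin_lt_sin_of_le (le_max_right _ _) hXZ).trans hZv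
end

section
/- Let X, d, d', Y, Y' be natural numbers with d < d'. If Y' is the best approximate of X up to d' (X|_{d'} = Y') and Y is the best approximate of X up to d (X|_d = Y), then Y is the best approximate of Y' up to d (Y'|_d = Y). -/
/-- **Lemma 3.5.** If `d < d'`, `X|_{d'} = Y'`, and `X|_d = Y`, then
`Y'|_d = Y`. -/
theorem bestApp_trans (X d d' Y Y' : ℕ) (hdd : d < d')
    (h' : BestApp X d' Y') (h : BestApp X d Y) : BestApp Y' d Y := by
  obtain ⟨hY'd, hY'X, h'max⟩ := h'
  obtain ⟨hYd, hYX, hmax⟩ := h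
  refine ⟨hYd, ?_, ?_⟩
  · by_cases hYY' : Y = Y'
    · simp [hYY']
    · exact le_of_lt (h'max Y (le_of_lt (lt_of_le_of_lt hYd hdd)) hYY' hYX)
  · intro Z hZd hZY hZY'
    exact hmax Z hZd hZY (le_trans hZY' hY'X)
end

section
/- For every natural number X₁ and every natural number b, there exists a natural number X₂ with X₂ > b such that Next(X₁, X₂) holds. -/
open Real

/-- The sine of a natural number is strictly less than 1 (since `π` is irrational). -/
lemma sin_nat_lt_one (n : ℕ) : Real.sin n < 1 := by
  rcases lt_or_eq_of_le (Real.sin_le_one (n : ℝ)) with h | h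
  · exact h
  · exfalso
    obtain ⟨k, hk⟩ := Real.sin_eq_one_iff.mp h
    have hk0 : (1 + 4 * k : ℤ) ≠ 0 := by omega
    have hπ : π = (2 * n : ℝ) / ((1 + 4 * k : ℤ) : ℝ) := by
      have hne : ((1 + 4 * k : ℤ) : ℝ) ≠ 0 := Int.cast_ne_zero.mpr hk0
      rw [eq_div_iff hne]
      push_cast
      linear_combination 2 * hk
    have hrat : ¬ Irrational ((2 * n : ℝ) / ((1 + 4 * k : ℤ) : ℝ)) := by
      have : ((2 * n : ℝ) / ((1 + 4 * k : ℤ) : ℝ)) =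
          (((2 * n : ℚ) / ((1 + 4 * k : ℤ) : ℚ) : ℚ) : ℝ) := by push_cast; ring
      rw [this]; exact Rat.not_irrational _
    exact hrat (hπ ▸ irrational_pi)

/-- There are natural numbers arbitrarily close to `2πℤ` but not in it. -/
lemma exists_small {δ : ℝ} (hδ : 0 < δ) :
    ∃ (d : ℕ) (m : ℤ) (r : ℝ), 1 ≤ d ∧ r ≠ 0 ∧ |r| < δ ∧ (d : ℝ) = r + 2 * π * m := by
  set S := AddSubgroup.closure ({1, 2 * π} : Set ℝ) with hS
  have hdense : Dense (S : Set ℝ) := by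
    rcases S.dense_or_cyclic with h | ⟨a, ha⟩
    · exact h
    · exfalso
      have h1 : (1 : ℝ) ∈ S := AddSubgroup.subset_closure (by simp)
      have h2 : (2 * π : ℝ) ∈ S := AddSubgroup.subset_closure (by simp)
      rw [ha, AddSubgroup.mem_closure_singleton] at h1 h2
      obtain ⟨p, hp⟩ := h1; obtain ⟨q, hq⟩ := h2
      rw [zsmul_eq_mul] at hp hq
      have hp0 : (p : ℝ) ≠ 0 := by
        intro h; rw [h, zero_mul] at hp; norm_num at hp
      have hπ : π = (q : ℝ) / (2 * p) := by
        rw [eq_div_iff (by simpa using hp0 : 2 * (p:ℝ) ≠ 0)]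
        linear_combination (q : ℝ) * hp - (p : ℝ) * hq
      have hrat : ¬ Irrational ((q : ℝ) / (2 * (p : ℝ))) := by
        have : ((q : ℝ) / (2 * (p : ℝ))) = (((q : ℚ) / (2 * (p : ℚ)) : ℚ) : ℝ) := by
          push_cast; ring
        rw [this]; exact Rat.not_irrational _
      exact hrat (hπ ▸ irrational_pi)
  have hne : (Set.Ioo (0 : ℝ) (min δ 1)).Nonempty := by
    refine Set.nonempty_Ioo.mpr ?_
    simp [hδ]
  obtain ⟨g, hgS, hg⟩ := hdense.exists_mem_open isOpen_Ioo hne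
  obtain ⟨hg0, hg1⟩ := hg
  obtain ⟨k, m, hkm⟩ := (AddSubgroup.mem_closure_pair).mp hgS
  rw [zsmul_eq_mul, zsmul_eq_mul, mul_one] at hkm
  have hgδ : g < δ := lt_of_lt_of_le hg1 (min_le_left _ _)
  have hgone : g < 1 := lt_of_lt_of_le hg1 (min_le_right _ _)
  have hπ3 := Real.pi_gt_three
  have hk0 : k ≠ 0 := by
    rintro rfl
    push_cast at hkm
    rcases le_or_gt m 0 with hm | hm
    · have : (m : ℝ) ≤ 0 := by exact_mod_cast hm
      nlinarith
    · have : (1 : ℝ) ≤ (m : ℝ) := by exact_mod_cast hm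
      nlinarith
  rcases hk0.lt_or_gt with hk | hk
  · refine ⟨(-k).toNat, m, -g, ?_, neg_ne_zero.mpr (ne_of_gt hg0), by rwa [abs_neg, abs_of_pos hg0], ?_⟩
    · omega
    · have : (((-k).toNat : ℤ) : ℝ) = ((-k : ℤ) : ℝ) := by
        congr 1; omega
      push_cast at this ⊢
      nlinarith [hkm]
  · refine ⟨k.toNat, -m, g, ?_, ne_of_gt hg0, by rwa [abs_of_pos hg0], ?_⟩
    · omega
    · have : ((k.toNat : ℤ) : ℝ) = ((k : ℤ) : ℝ) := by
        congr 1; omega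
      push_cast at this ⊢
      nlinarith [hkm]

lemma step_pos {r δ : ℝ} (θ : ℝ) (hr : 0 < r) (hrδ : r < δ) (J : ℕ) :
    ∃ j : ℕ, J < j ∧ ∃ s : ℤ, |j * r - (θ + 2 * π * s)| < δ := by
  have h2π : (0 : ℝ) < 2 * π := by positivity
  obtain ⟨s, hs⟩ := exists_int_gt (((J : ℝ) * r + δ - θ) / (2 * π))
  rw [div_lt_iff₀ h2π] at hs
  set A : ℝ := θ + 2 * π * s - δ with hA
  have hA0 : (J : ℝ) * r < A := by nlinarith
  have hex : ∃ j : ℕ, A < j * r := by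
    obtain ⟨j, hj⟩ := exists_nat_gt (A / r)
    exact ⟨j, by rwa [div_lt_iff₀ hr] at hj⟩
  set j := Nat.find hex with hj
  have hjA : A < (j : ℝ) * r := Nat.find_spec hex
  have hJj : J < j := by
    by_contra h
    push_neg at h
    have : (j : ℝ) ≤ (J : ℝ) := by exact_mod_cast h
    nlinarith
  have hj1 : 1 ≤ j := by omega
  have hprev : ¬ A < ((j - 1 : ℕ) : ℝ) * r := Nat.find_min hex (by omega)
  push_neg at hprev
  have hcast : ((j - 1 : ℕ) : ℝ) = (j : ℝ) - 1 := by
    push_cast [Nat.cast_sub hj1]; ring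
  rw [hcast] at hprev
  refine ⟨j, hJj, s, ?_⟩
  rw [abs_lt]
  constructor
  · linarith
  · nlinarith

lemma step_ne {r δ : ℝ} (θ : ℝ) (hr : r ≠ 0) (hrδ : |r| < δ) (J : ℕ) :
    ∃ j : ℕ, J < j ∧ ∃ s : ℤ, |j * r - (θ + 2 * π * s)| < δ := by
  rcases hr.lt_or_gt with h | h
  · obtain ⟨j, hj, s, hs⟩ := step_pos (-θ) (by linarith : 0 < -r)
      (by rwa [abs_of_neg h] at hrδ) J
    refine ⟨j, hj, -s, ?_⟩
    rw [← abs_neg]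
    convert hs using 2
    push_cast
    ring
  · exact step_pos θ h (by rwa [abs_of_pos h] at hrδ) J

/-- Density of `{sin n : n ∈ ℕ}` in `[-1, 1]`, with arbitrarily large witnesses. -/
lemma exists_sin_mem {a c : ℝ} (ha : -1 ≤ a) (hc : c ≤ 1) (hac : a < c) (B : ℕ) :
    ∃ n : ℕ, B < n ∧ a < Real.sin n ∧ Real.sin n < c := by
  set y : ℝ := (a + c) / 2 with hy
  have hy1 : -1 ≤ y := by rw [hy]; linarith
  have hy2 : y ≤ 1 := by rw [hy]; linarith
  set θ := Real.arcsin y with hθdef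
  have hθ : Real.sin θ = y := Real.sin_arcsin hy1 hy2
  have hε : 0 < min (c - y) (y - a) := by
    rw [lt_min_iff, hy]; constructor <;> linarith
  obtain ⟨δ0, hδ0, hδ⟩ := Metric.continuousAt_iff.mp Real.continuous_sin.continuousAt _ hε
  obtain ⟨d, m, r, hd, hr0, hrδ, hdr⟩ := exists_small hδ0
  obtain ⟨j, hj, s, hs⟩ := step_ne θ hr0 hrδ B
  have key : Real.sin ((j * d : ℕ) : ℝ) = Real.sin ((j : ℝ) * r - 2 * π * s) := by
    have h1 : ((j * d : ℕ) : ℝ) = ((j : ℝ) * r - 2 * π * s) + ((j * m + s : ℤ) : ℝ) * (2 * π) := by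
      push_cast [hdr]; ring
    rw [h1, Real.sin_add_int_mul_two_pi]
  have hdist : dist ((j : ℝ) * r - 2 * π * s) θ < δ0 := by
    rw [Real.dist_eq]
    convert hs using 2
    ring
  have := hδ hdist
  rw [Real.dist_eq, hθ, abs_lt] at this
  rw [lt_min_iff] at hε
  refine ⟨j * d, ?_, ?_, ?_⟩
  · calc B < j := hj
      _ ≤ j * d := le_mul_of_one_le_right (Nat.zero_le j) hd
  · rw [key]
    have h1 := this.1
    have h2 := min_le_right (c - y) (y - a)
    linarith
  · rw [key]
    have h1 := this.2
    have h2 := min_le_left (c - y) (y - a)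
    linarith

/-- `Next X₁ X₂` holds iff `X₁ < X₂`, `sin X₁ < sin X₂`, and for every `Z < X₂`
either `sin Z ≤ sin X₁` or `sin X₂ < sin Z`. -/
def Next (X₁ X₂ : ℕ) : Prop :=
  X₁ < X₂ ∧ Real.sin X₁ < Real.sin X₂ ∧
    ∀ Z : ℕ, Z < X₂ → Real.sin Z ≤ Real.sin X₁ ∨ Real.sin X₂ < Real.sin Z

/-- **Lemma 3.10.** For every `X₁` there exist arbitrarily large `X₂` such
that `Next X₁ X₂` holds. -/
theorem exists_next (X₁ : ℕ) (b : ℕ) : ∃ X₂ : ℕ, X₂ > b ∧ Next X₁ X₂ := by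
  set B₀ := max b X₁ with hB₀
  set F : Finset ℕ := (Finset.range (B₀ + 1)).filter (fun Z => Real.sin X₁ < Real.sin Z)
    with hF
  set T : Finset ℝ := insert (1 : ℝ) (F.image (fun Z : ℕ => Real.sin Z)) with hT
  have hTne : T.Nonempty := ⟨1, by simp [hT]⟩
  set t : ℝ := T.min' hTne with ht
  have htlt : Real.sin X₁ < t := by
    rw [ht, Finset.lt_min'_iff]
    intro x hx
    rw [hT, Finset.mem_insert] at hx
    rcases hx with rfl | hx
    · exact sin_nat_lt_one X₁
    · obtain ⟨Z, hZ, rfl⟩ := Finset.mem_image.mp hx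
      exact (Finset.mem_filter.mp hZ).2
  have ht1 : t ≤ 1 := Finset.min'_le _ _ (by simp [hT])
  have htF : ∀ Z ∈ F, t ≤ Real.sin Z := fun Z hZ =>
    Finset.min'_le _ _ (by rw [hT]; exact Finset.mem_insert_of_mem (Finset.mem_image_of_mem _ hZ))
  have hex : ∃ n : ℕ, B₀ < n ∧ Real.sin X₁ < Real.sin n ∧ Real.sin n < t :=
    exists_sin_mem (Real.neg_one_le_sin _) ht1 htlt B₀
  set X₂ := Nat.find hex with hX₂
  obtain ⟨hB, hsin, hsint⟩ := Nat.find_spec hex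
  refine ⟨X₂, ?_, ?_, hsin, ?_⟩
  · exact lt_of_le_of_lt (le_max_left _ _) hB
  · exact lt_of_le_of_lt (le_max_right _ _) hB
  · intro Z hZ
    by_cases hZB : Z ≤ B₀
    · by_cases hs : Real.sin Z ≤ Real.sin X₁
      · exact Or.inl hs
      · push_neg at hs
        have hZF : Z ∈ F := Finset.mem_filter.mpr ⟨Finset.mem_range.mpr (by omega), hs⟩
        exact Or.inr (lt_of_lt_of_le hsint (htF Z hZF))
    · push_neg at hZB
      have := Nat.find_min hex hZ
      push_neg at this
      rcases lt_or_ge (Real.sin X₁) (Real.sin Z) with h | h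
      · exact Or.inr (lt_of_lt_of_le hsint (this hZB h))
      · exact Or.inl h
end

section
/- Let n ≥ 1, let N be a positive integer, and let U ⊆ ℝⁿ be an open set such that for every x ∈ U and every j ∈ {1, …, n}, both x + 2Nπ·eⱼ ∈ U and x − 2Nπ·eⱼ ∈ U, where eⱼ is the j-th standard basis vector. Then U contains a point of ℤⁿ if and only if U is nonempty. -/
/-! Translations by `2Nπ` in each coordinate generate the lattice `2Nπ ℤⁿ`, under which `U` is
invariant. Since `2Nπ` is irrational, `ℤ + 2Nπ ℤ` is dense in `ℝ`, so the open set `U` meets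
`ℤⁿ + 2Nπ ℤⁿ`, and translating that point back by the lattice lands on a point of `ℤⁿ` in `U`. -/

theorem add_mem_of_mem_addSubgroupClosure {G : Type*} [AddGroup G] {U s : Set G}
    (hs : ∀ x ∈ U, ∀ v ∈ s, x + v ∈ U ∧ x - v ∈ U) {v : G} (hv : v ∈ AddSubgroup.closure s) :
    ∀ x ∈ U, x + v ∈ U := by
  -- the `x - v` half makes the induction hypothesis stable under negation
  suffices ∀ x ∈ U, x + v ∈ U ∧ x - v ∈ U from fun x hx => (this x hx).1
  induction hv using AddSubgroup.closure_induction with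
  | mem v hv => exact fun x hx => hs x hx v hv
  | zero => simp
  | add a b _ _ ha hb =>
    intro x hx
    refine ⟨?_, ?_⟩
    · rw [← add_assoc]; exact (hb _ (ha x hx).1).1
    · rw [sub_add_eq_sub_sub_swap]; exact (ha _ (hb x hx).2).2
  | neg a _ ha => simpa [sub_eq_add_neg, and_comm] using ha

theorem smul_intCast_mem_closure_smul_single {ι R : Type*} [Fintype ι] [DecidableEq ι] [Ring R]
    (a : R) (k : ι → ℤ) :
    a • (fun i => (k i : R)) ∈ AddSubgroup.closure (Set.range fun j => a • Pi.single j (1 : R)) := by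
  have hsum : a • (fun i => (k i : R)) = ∑ j, k j • (a • Pi.single j (1 : R)) := by
    ext i
    simp [Finset.sum_apply, Pi.single_apply, Int.cast_comm]
  rw [hsum]
  exact AddSubgroup.sum_mem _ fun j _ =>
    AddSubgroup.zsmul_mem _ (AddSubgroup.subset_closure (Set.mem_range_self j)) _

theorem Irrational.denseRange_intCast_add_intCast_mul {θ : ℝ} (hθ : Irrational θ) :
    DenseRange fun p : ℤ × ℤ => (p.1 : ℝ) + p.2 * θ := by
  refine (dense_addSubgroupClosure_pair_iff.2 (by simpa using hθ) : Dense
    (AddSubgroup.closure {θ, 1} : Set ℝ)).mono ?_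
  rintro _ hz
  obtain ⟨m, k, rfl⟩ := AddSubgroup.mem_closure_pair.1 hz
  exact ⟨(k, m), by simp [add_comm]⟩

theorem open_invariant_contains_int_point_iff_nonempty_general
    (n : ℕ) (N : ℕ) (hN : 0 < N)
    (U : Set (Fin n → ℝ)) (hU : IsOpen U)
    (hinv : ∀ x ∈ U, ∀ j : Fin n,
      (x + (2 * N * Real.pi) • (Pi.single j 1 : Fin n → ℝ)) ∈ U ∧
        (x - (2 * N * Real.pi) • (Pi.single j 1 : Fin n → ℝ)) ∈ U) :
    (∃ z : Fin n → ℤ, (fun i => (z i : ℝ)) ∈ U) ↔ U.Nonempty := by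
  set θ : ℝ := 2 * N * Real.pi
  refine ⟨fun ⟨z, hz⟩ => ⟨_, hz⟩, fun hne => ?_⟩
  have hθ : Irrational θ := by
    simpa [θ, mul_assoc] using irrational_pi.natCast_mul (m := 2 * N) (by positivity)
  have hlattice : ∀ x ∈ U, ∀ k : Fin n → ℤ, x + θ • (fun i => (k i : ℝ)) ∈ U := fun x hx k =>
    add_mem_of_mem_addSubgroupClosure (by rintro y hy _ ⟨j, rfl⟩; exact hinv y hy j)
      (smul_intCast_mem_closure_smul_single θ k) x hx
  obtain ⟨p, hp⟩ := (DenseRange.piMap fun _ : Fin n => hθ.denseRange_intCast_add_intCast_mul)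
    |>.exists_mem_open hU hne
  refine ⟨fun i => (p i).1, ?_⟩
  convert hlattice _ hp fun i => -(p i).2 using 1
  ext i
  simp [mul_comm]

/-- **Semantic core of the reduction to the reals.**  Let `n ≥ 1`, `N > 0`,
and let `U ⊆ ℝⁿ` be an open set invariant under translation by `±2Nπ` in each
coordinate.  Then `U` contains a point of `ℤⁿ` iff `U` is nonempty. -/
theorem open_invariant_contains_int_point_iff_nonempty
    (n : ℕ) (hn : 1 ≤ n) (N : ℕ) (hN : 0 < N)
    (U : Set (Fin n → ℝ)) (hU : IsOpen U)
    (hinv : ∀ x ∈ U, ∀ j : Fin n,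
      (x + (2 * N * Real.pi) • (Pi.single j 1 : Fin n → ℝ)) ∈ U ∧
        (x - (2 * N * Real.pi) • (Pi.single j 1 : Fin n → ℝ)) ∈ U) :
    (∃ z : Fin n → ℤ, (fun i => (z i : ℝ)) ∈ U) ↔ U.Nonempty :=
  open_invariant_contains_int_point_iff_nonempty_general n N hN U hU hinv
end
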